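/- With A_m(r) = ∑_{j=1}^{m} ((-1)^j/(j-1)!) ∑_{k=j}^{m} C(m,k) C(k-1,r-1) (-1)^k for integers m ≥ 1, r ≥ 1, one has A_m(0) = 0 (with the convention C(k-1,-1) interpreted via the defining sum being empty) and A_m(1) = ∑_{j=1}^{m} C(m-1, j-1)/(j-1)!, and A_m(r) → +∞ as m → ∞ for each fixed integer r ≥ 1. -/

import Mathlib

open Filter

/-- Binomial coefficient with integer lower index, `0` for negative lower index. -/
def chooseZ (n : ℕ) (k : ℤ) : ℚ :=
  if 0 ≤ k then (n.choose k.toNat : ℚ) else 0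

/-- `A_m(r)` from the paper, with the convention `C(k-1,-1) = 0` for `r = 0`. -/
noncomputable def A (m r : ℕ) : ℚ :=
  ∑ j ∈ Finset.Icc 1 m, ((-1 : ℚ) ^ j / (Nat.factorial (j - 1) : ℚ)) *
    ∑ k ∈ Finset.Icc j m, (m.choose k : ℚ) * chooseZ (k - 1) ((r : ℤ) - 1) * (-1 : ℚ) ^ k

open Finset
open scoped Nat

/-!
Write `e k = ∑_{i<k} (-1)^i / i!` and `b k = C(m,k) C(k-1,r-1) ≥ 0`. Exchanging the two sums gives
`A m r = -∑_{k=1}^m (-1)^k b k e k`. Now `(-1)^k (e m - e k) = ∑_{i<m-k} (-1)^i / (k+i)!` is an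
alternating sum of decreasing terms, so it lies in `[0, 1/k!]`, and above `1/k! - 1/(k+1)!` once
`m - k ≥ 2`; moreover `∑_k (-1)^k b k = (-1)^r` for `r ≤ m`. Hence
`A m r = -(-1)^r e m + ∑_k b k (-1)^k (e m - e k)`, where the first term is at least `-1` and the
sum is at least its `k = r` term `C(m,r) (1/r! - 1/(r+1)!)`, which tends to infinity with `m`.
-/

theorem neg_one_pow_mul_self {R : Type*} [Monoid R] [HasDistribNeg R] (n : ℕ) :
    (-1 : R) ^ n * (-1) ^ n = 1 := by
  rw [← pow_add]
  exact Even.neg_one_pow ⟨n, rfl⟩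

-- The left side is `(-1)^m` times the `m`-th forward difference of `x ↦ x.choose s` at `0`.
theorem sum_range_neg_one_pow_mul_choose_mul_choose (m s : ℕ) :
    ∑ k ∈ range (m + 1), (-1 : ℤ) ^ k * m.choose k * k.choose s =
      if m = s then (-1) ^ m else 0 := by
  have h := congrArg ((-1 : ℤ) ^ m * ·) (fwdDiff_iter_choose_zero s m)
  simp only [fwdDiff_iter_eq_sum_shift, mul_sum, smul_eq_mul, zero_add, mul_one, mul_ite,
    mul_zero] at h
  rw [← h]
  refine sum_congr rfl fun k hk => ?_
  have hkm : k ≤ m := Nat.lt_succ_iff.mp (mem_range.mp hk)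
  rw [← mul_assoc, ← mul_assoc, ← pow_add, show m + (m - k) = k + 2 * (m - k) by omega, pow_add,
    pow_mul, neg_one_sq, one_pow, mul_one]

theorem sum_range_neg_one_pow_mul_choose_succ_mul_choose (m s : ℕ) :
    ∑ k ∈ range m, (-1 : ℤ) ^ k * m.choose (k + 1) * k.choose s =
      if s < m then (-1) ^ s else 0 := by
  induction m with
  | zero => simp
  | succ m ih =>
    have hpascal : ∀ k, ((m + 1).choose (k + 1) : ℤ) = m.choose k + m.choose (k + 1) := by
      intro k; exact_mod_cast Nat.choose_succ_succ' m k
    simp only [hpascal, mul_add, add_mul, sum_add_distrib]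
    rw [sum_range_neg_one_pow_mul_choose_mul_choose,
      sum_range_succ (fun k => (-1 : ℤ) ^ k * m.choose (k + 1) * k.choose s), ih,
      Nat.choose_succ_self]
    split_ifs <;> grind

theorem sum_Icc_neg_one_pow_mul_choose {n j : ℕ} (hj : j ≤ n) :
    ∑ k ∈ Icc (j + 1) (n + 1), (-1 : ℤ) ^ k * (n + 1).choose k = (-1) ^ (j + 1) * n.choose j := by
  have h := sum_range_add_sum_Ico (fun k => (-1 : ℤ) ^ k * (n + 1).choose k)
    (show j + 1 ≤ n + 1 + 1 by omega)
  rw [Int.alternating_sum_range_choose_of_ne n.succ_ne_zero,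
    Int.alternating_sum_range_choose_eq_choose, Ico_add_one_right_eq_Icc] at h
  rw [pow_succ]
  linear_combination h

theorem Nat.tendsto_choose_atTop {r : ℕ} (hr : r ≠ 0) :
    Tendsto (fun m : ℕ => m.choose r) atTop atTop := by
  refine tendsto_atTop_atTop_of_monotone (Nat.choose_mono r) fun b => ⟨b + r, ?_⟩
  calc b ≤ (b + 1).choose b := by rw [Nat.choose_succ_self_right]; omega
    _ ≤ (b + r).choose b := Nat.choose_le_choose b (by omega)
    _ = (b + r).choose r := Nat.choose_symm_add

section Alternating

variable {R : Type*} [CommRing R] [LinearOrder R] [IsStrictOrderedRing R] {f : ℕ → R}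

theorem Antitone.sum_range_neg_one_pow_mul_mem_Icc (hf : Antitone f) (hf0 : ∀ i, 0 ≤ f i)
    (n : ℕ) : ∑ i ∈ range n, (-1) ^ i * f i ∈ Set.Icc 0 (f 0) := by
  induction n generalizing f with
  | zero => simpa using hf0 0
  | succ n ih =>
    obtain ⟨hlo, hhi⟩ := ih (f := fun i => f (i + 1)) (fun a b h => hf (by omega)) fun i => hf0 _
    simp only [sum_range_succ', pow_succ, mul_neg_one, neg_mul, sum_neg_distrib, pow_zero,
      one_mul, zero_add, Set.mem_Icc] at hlo hhi ⊢
    constructor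
    · linarith [hf (Nat.zero_le 1)]
    · linarith

theorem Antitone.sub_le_sum_range_neg_one_pow_mul (hf : Antitone f) (hf0 : ∀ i, 0 ≤ f i)
    {n : ℕ} (hn : 2 ≤ n) : f 0 - f 1 ≤ ∑ i ∈ range n, (-1) ^ i * f i := by
  obtain ⟨n, rfl⟩ := Nat.exists_eq_add_of_le' (show 1 ≤ n by omega)
  have := (Antitone.sum_range_neg_one_pow_mul_mem_Icc (f := fun i => f (i + 1))
    (fun a b h => hf (by omega)) (fun i => hf0 _) n).2
  simp only [sum_range_succ', pow_succ, mul_neg_one, neg_mul, sum_neg_distrib, pow_zero,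
    one_mul, zero_add] at this ⊢
  linarith

end Alternating

theorem sum_Icc_neg_one_pow_mul_choose_mul_choose_sub_one {m s : ℕ} (hs : s < m) :
    ∑ k ∈ Icc 1 m, (-1 : ℤ) ^ k * m.choose k * (k - 1).choose s = -(-1) ^ s := by
  have h := sum_range_neg_one_pow_mul_choose_succ_mul_choose m s
  rw [if_pos hs] at h
  rw [← Ico_add_one_right_eq_Icc, sum_Ico_eq_sum_range, ← h, ← sum_neg_distrib]
  refine sum_congr (by simp) fun k _ => ?_
  rw [add_comm 1 k, Nat.add_sub_cancel, pow_succ]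
  ring

theorem sum_Icc_mul_sum_Icc_comm {R : Type*} [NonUnitalNonAssocSemiring R] (f g : ℕ → R)
    (a m : ℕ) :
    ∑ j ∈ Icc a m, f j * ∑ k ∈ Icc j m, g k = ∑ k ∈ Icc a m, (∑ j ∈ Icc a k, f j) * g k := by
  simp_rw [mul_sum, sum_mul]
  exact sum_comm' fun j k => by simp only [mem_Icc]; omega

def altInvFactorialSum (k n : ℕ) : ℚ :=
  ∑ i ∈ range n, (-1) ^ i * ((k + i)! : ℚ)⁻¹

theorem antitone_inv_factorial_add (k : ℕ) : Antitone fun i => ((k + i)! : ℚ)⁻¹ :=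
  fun _ _ h => inv_anti₀ (by positivity) (by exact_mod_cast Nat.factorial_le (by omega))

theorem altInvFactorialSum_mem_Icc (k n : ℕ) :
    altInvFactorialSum k n ∈ Set.Icc 0 (k ! : ℚ)⁻¹ := by
  simpa [altInvFactorialSum] using (antitone_inv_factorial_add k).sum_range_neg_one_pow_mul_mem_Icc
    (fun _ => by positivity) n

theorem sub_le_altInvFactorialSum (k : ℕ) {n : ℕ} (hn : 2 ≤ n) :
    (k ! : ℚ)⁻¹ - ((k + 1)! : ℚ)⁻¹ ≤ altInvFactorialSum k n := by
  simpa [altInvFactorialSum] using (antitone_inv_factorial_add k).sub_le_sum_range_neg_one_pow_mul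
    (fun _ => by positivity) hn

theorem altInvFactorialSum_zero_add (k n : ℕ) :
    altInvFactorialSum 0 (k + n) = altInvFactorialSum 0 k + (-1) ^ k * altInvFactorialSum k n := by
  simp only [altInvFactorialSum, sum_range_add, zero_add, pow_add, mul_sum, mul_assoc]

theorem sum_Icc_neg_one_pow_div_factorial (k : ℕ) :
    ∑ j ∈ Icc 1 k, (-1 : ℚ) ^ j / (j - 1)! = -altInvFactorialSum 0 k := by
  induction k with
  | zero => simp [altInvFactorialSum]
  | succ k ih =>
    rw [sum_Icc_succ_top (by omega), ih, altInvFactorialSum, altInvFactorialSum, sum_range_succ]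
    simp only [Nat.add_sub_cancel, zero_add, pow_succ]
    ring

theorem A_zero (m : ℕ) : A m 0 = 0 := by
  simp [A, chooseZ]

theorem A_one (m : ℕ) : A m 1 = ∑ j ∈ Icc 1 m, ((m - 1).choose (j - 1) : ℚ) / (j - 1)! := by
  rcases m with _ | n
  · simp [A]
  refine sum_congr rfl fun j hj => ?_
  obtain ⟨j, rfl⟩ : ∃ i, j = i + 1 := ⟨j - 1, by simp at hj; omega⟩
  have hinner : ∑ k ∈ Icc (j + 1) (n + 1),
      ((n + 1).choose k : ℚ) * chooseZ (k - 1) ((1 : ℕ) - 1 : ℤ) * (-1) ^ k =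
        (-1) ^ (j + 1) * n.choose j := by
    have := sum_Icc_neg_one_pow_mul_choose (n := n) (j := j) (by simp at hj; omega)
    simp only [chooseZ, Nat.cast_one, sub_self, le_refl, if_true, Int.toNat_zero,
      Nat.choose_zero_right, mul_one]
    exact_mod_cast (sum_congr rfl fun k _ => mul_comm _ _).trans this
  rw [hinner, Nat.add_sub_cancel, Nat.add_sub_cancel]
  linear_combination ((n.choose j : ℚ) / j !) * neg_one_pow_mul_self (R := ℚ) (j + 1)

theorem A_eq_sum_neg_altInvFactorialSum_mul (m r : ℕ) :
    A m r = ∑ k ∈ Icc 1 m,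
      -altInvFactorialSum 0 k * ((m.choose k : ℚ) * chooseZ (k - 1) ((r : ℤ) - 1) * (-1) ^ k) := by
  simp only [A, sum_Icc_mul_sum_Icc_comm, sum_Icc_neg_one_pow_div_factorial]

theorem A_succ_eq {m s : ℕ} (hs : s < m) :
    A m (s + 1) = (-1) ^ s * altInvFactorialSum 0 m +
      ∑ k ∈ Icc 1 m, (m.choose k : ℚ) * (k - 1).choose s * altInvFactorialSum k (m - k) := by
  have hchoose : ∀ k, chooseZ k ((s + 1 : ℕ) - 1 : ℤ) = k.choose s := by
    intro k; simp [chooseZ]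
  have hterm : ∀ k ∈ Icc 1 m,
      -altInvFactorialSum 0 k *
          ((m.choose k : ℚ) * chooseZ (k - 1) ((s + 1 : ℕ) - 1 : ℤ) * (-1) ^ k)
        = -altInvFactorialSum 0 m * ((-1) ^ k * m.choose k * (k - 1).choose s) +
          (m.choose k : ℚ) * (k - 1).choose s * altInvFactorialSum k (m - k) := by
    intro k hk
    have hsplit := altInvFactorialSum_zero_add k (m - k)
    rw [Nat.add_sub_cancel' (mem_Icc.mp hk).2] at hsplit
    rw [hchoose, hsplit]
    linear_combination ((m.choose k : ℚ) * (k - 1).choose s * altInvFactorialSum k (m - k)) *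
      neg_one_pow_mul_self (R := ℚ) k
  have hF : ∑ k ∈ Icc 1 m, (-1 : ℚ) ^ k * m.choose k * (k - 1).choose s = -(-1) ^ s := by
    exact_mod_cast sum_Icc_neg_one_pow_mul_choose_mul_choose_sub_one hs
  rw [A_eq_sum_neg_altInvFactorialSum_mul, sum_congr rfl hterm, sum_add_distrib, ← mul_sum, hF]
  ring

theorem choose_mul_sub_one_le_A {m s : ℕ} (hm : s + 3 ≤ m) :
    (m.choose (s + 1) : ℚ) * (((s + 1)! : ℚ)⁻¹ - ((s + 2)! : ℚ)⁻¹) - 1 ≤ A m (s + 1) := by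
  rw [A_succ_eq (by omega)]
  obtain ⟨hE₀, hE₁⟩ := altInvFactorialSum_mem_Icc 0 m
  rw [Nat.factorial_zero, Nat.cast_one, inv_one] at hE₁
  have hsign : -1 ≤ (-1) ^ s * altInvFactorialSum 0 m := by
    rcases neg_one_pow_eq_or ℚ s with h | h <;> rw [h] <;> linarith
  have hdominant : (m.choose (s + 1) : ℚ) * (((s + 1)! : ℚ)⁻¹ - ((s + 2)! : ℚ)⁻¹) ≤
      ∑ k ∈ Icc 1 m, (m.choose k : ℚ) * (k - 1).choose s * altInvFactorialSum k (m - k) := by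
    have hr : s + 1 ∈ Icc 1 m := mem_Icc.mpr ⟨by omega, by omega⟩
    refine le_trans ?_ (single_le_sum (fun k _ => ?_) hr)
    · rw [Nat.add_sub_cancel, Nat.choose_self, Nat.cast_one, mul_one]
      gcongr
      exact sub_le_altInvFactorialSum (s + 1) (by omega)
    · exact mul_nonneg (by positivity) (altInvFactorialSum_mem_Icc _ _).1
  linarith

theorem tendsto_A_atTop {r : ℕ} (hr : r ≠ 0) : Tendsto (fun m => A m r) atTop atTop := by
  obtain ⟨s, rfl⟩ : ∃ s, r = s + 1 := ⟨r - 1, by omega⟩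
  have hd : 0 < ((s + 1)! : ℚ)⁻¹ - ((s + 2)! : ℚ)⁻¹ := by
    rw [sub_pos]
    exact inv_strictAnti₀ (by positivity)
      (by exact_mod_cast (Nat.factorial_lt s.succ_pos).mpr s.succ.lt_succ_self)
  have hlower :=
    (tendsto_natCast_atTop_atTop.comp (Nat.tendsto_choose_atTop hr)).atTop_mul_const hd
  refine tendsto_atTop_mono' atTop
    (eventually_atTop.mpr ⟨s + 3, fun m hm => choose_mul_sub_one_le_A hm⟩) ?_
  exact (tendsto_atTop_add_const_right atTop (-1) hlower).congr fun m => (sub_eq_add_neg _ _).symm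

theorem stmt15 :
    (∀ m : ℕ, 1 ≤ m → A m 0 = 0) ∧
    (∀ m : ℕ, 1 ≤ m →
      A m 1 = ∑ j ∈ Finset.Icc 1 m,
        ((m - 1).choose (j - 1) : ℚ) / (Nat.factorial (j - 1) : ℚ)) ∧
    (∀ r : ℕ, 1 ≤ r → Tendsto (fun m : ℕ => A m r) atTop atTop) :=
  ⟨fun m _ => A_zero m, fun m _ => A_one m, fun _ hr => tendsto_A_atTop (by omega)⟩
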